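/- arXiv:2502.05631 — 2 statements merged into one kernel-verified Lean document; each statement's English description precedes it below -/
import Mathlib

section
/- Let X be a set, I and J finite index sets, and ξ a finitely supported probability distribution on X. Suppose ξ = ⊕_{i∈I} p_i · μ_i and ξ = ⊕_{j∈J} q_j · ν_j are two convex decompositions of ξ into distributions μ_i, ν_j with weights p_i, q_j ∈ [0,1] summing to 1. Then there exist r_{ij} ∈ [0,1] and distributions ϱ_{ij} on X such that ∑_{i∈I} r_{ij} = q_j for all j, ∑_{j∈J} r_{ij} = p_i for all i, p_i · μ_i = ⊕_{j∈J} r_{ij} · ϱ_{ij} for all i, and q_j · ν_j = ⊕_{i∈I} r_{ij} · ϱ_{ij} for all j. -/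
open scoped BigOperators
open Classical

namespace PBB

structure Distr (X : Type) where
  f : X → ℝ
  nonneg : ∀ x, 0 ≤ f x
  fin : (Function.support f).Finite
  sum_one : ∑ᶠ x, f x = 1

namespace Distr

variable {X : Type}

noncomputable def dirac (E : X) : Distr X where
  f := fun x => if x = E then 1 else 0
  nonneg := fun x => by by_cases h : x = E <;> simp [h]
  fin := Set.Finite.subset (Set.finite_singleton E) (by
    intro x hx
    simp only [Function.mem_support] at hx
    by_contra h
    simp only [Set.mem_singleton_iff] at h
    simp [h] at hx)
  sum_one := by
    rw [finsum_eq_single _ E (by intro x hx; simp [hx])]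
    simp

noncomputable def mix (r : ℝ) (h0 : 0 ≤ r) (h1 : r ≤ 1) (μ ν : Distr X) : Distr X where
  f := fun x => r * μ.f x + (1 - r) * ν.f x
  nonneg := fun x =>
    add_nonneg (mul_nonneg h0 (μ.nonneg x)) (mul_nonneg (by linarith) (ν.nonneg x))
  fin := Set.Finite.subset (μ.fin.union ν.fin) (by
    intro x hx
    simp only [Function.mem_support] at hx
    by_contra h
    simp only [Set.mem_union, Function.mem_support, not_or, not_not] at h
    simp [h.1, h.2] at hx)
  sum_one := by
    have hf : (Function.support fun x => r * μ.f x).Finite :=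
      Set.Finite.subset μ.fin (by
        intro x hx
        simp only [Function.mem_support] at hx ⊢
        intro h; simp [h] at hx)
    have hg : (Function.support fun x => (1 - r) * ν.f x).Finite :=
      Set.Finite.subset ν.fin (by
        intro x hx
        simp only [Function.mem_support] at hx ⊢
        intro h; simp [h] at hx)
    rw [finsum_add_distrib hf hg, ← mul_finsum _ _, ← mul_finsum _ _,
      μ.sum_one, ν.sum_one]
    ring

end Distr

def IsMix {X : Type} (r : ℝ) (μ ν ξ : Distr X) : Prop :=
  ∀ x, ξ.f x = r * μ.f x + (1 - r) * ν.f x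

def IsCombo {X I : Type} [Fintype I] (p : I → ℝ) (μs : I → Distr X) (ξ : Distr X) : Prop :=
  (∀ i, 0 ≤ p i) ∧ (∑ i, p i = 1) ∧ ∀ x, ξ.f x = ∑ i, p i * (μs i).f x

/-!
Couple the two decompositions independently given the point: the pair `(i, j)` together with the
point `x` receives mass `p i μ_i(x) · q j ν_j(x) / ξ(x)`. Summing over `j` gives back `p i μ_i(x)`
because the `q j ν_j` add up to `ξ`, and symmetrically over `i`. Then `r i j` is the total mass
of the pair `(i, j)` and `ϱ i j` is its normalisation.
-/

theorem sum_mul_div_of_sum_eq {J : Type} [Fintype J] {a s : ℝ} {b : J → ℝ}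
    (hb : ∑ j, b j = s) (ha : s = 0 → a = 0) : ∑ j, a * b j / s = a := by
  rcases eq_or_ne s 0 with hs | hs
  · simp [hs, ha hs]
  · rw [← Finset.sum_div, ← Finset.mul_sum, hb, mul_div_cancel_right₀ a hs]

namespace Distr

variable {X : Type}

theorem nonempty (μ : Distr X) : Nonempty X := by
  by_contra h
  have : IsEmpty X := not_nonempty_iff.mp h
  exact zero_ne_one (finsum_of_isEmpty μ.f ▸ μ.sum_one)

theorem exists_eq_finsum_mul [Nonempty X] {g : X → ℝ} (hg : ∀ x, 0 ≤ g x)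
    (hfin : (Function.support g).Finite) : ∃ ϱ : Distr X, ∀ x, g x = (∑ᶠ y, g y) * ϱ.f x := by
  by_cases h0 : ∑ᶠ y, g y = 0
  · refine ⟨dirac (Classical.arbitrary X), fun x => ?_⟩
    rw [h0, zero_mul]
    exact le_antisymm (h0 ▸ single_le_finsum x hfin hg) (hg x)
  · refine ⟨⟨fun x => g x / ∑ᶠ y, g y, fun x => div_nonneg (hg x) (finsum_nonneg hg),
      hfin.subset fun x hx h => hx (by simp [h]), ?_⟩, fun x => (mul_div_cancel₀ _ h0).symm⟩
    simp_rw [div_eq_mul_inv]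
    rw [← finsum_mul, mul_inv_cancel₀ h0]

end Distr

namespace IsCombo

variable {X I : Type} [Fintype I] {p : I → ℝ} {μ : I → Distr X} {ξ : Distr X}

theorem mul_eq_zero_of_eq_zero (h : IsCombo p μ ξ) {x : X} (hx : ξ.f x = 0) (i : I) :
    p i * (μ i).f x = 0 := by
  have hsum := h.2.2 x
  rw [hx, eq_comm, Finset.sum_eq_zero_iff_of_nonneg
    fun i _ => mul_nonneg (h.1 i) ((μ i).nonneg x)] at hsum
  exact hsum i (Finset.mem_univ i)

theorem le_one (h : IsCombo p μ ξ) (i : I) : p i ≤ 1 :=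
  h.2.1 ▸ Finset.single_le_sum (fun i _ => h.1 i) (Finset.mem_univ i)

end IsCombo

/-- Vanishes off the support of `ξ`, since `x / 0 = 0`. -/
noncomputable def couplingMass {X I J : Type} (ξ : Distr X) (p : I → ℝ) (μ : I → Distr X)
    (q : J → ℝ) (ν : J → Distr X) (i : I) (j : J) (x : X) : ℝ :=
  p i * (μ i).f x * (q j * (ν j).f x) / ξ.f x

section couplingMass

variable {X I J : Type} {ξ : Distr X} {p : I → ℝ} {q : J → ℝ} {μ : I → Distr X} {ν : J → Distr X}

theorem support_couplingMass_finite (i : I) (j : J) :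
    (Function.support (couplingMass ξ p μ q ν i j)).Finite :=
  ξ.fin.subset fun x hx h => hx (by simp [couplingMass, h])

variable [Fintype I] [Fintype J]

theorem couplingMass_nonneg (h1 : IsCombo p μ ξ) (h2 : IsCombo q ν ξ) (i : I) (j : J) (x : X) :
    0 ≤ couplingMass ξ p μ q ν i j x :=
  div_nonneg (mul_nonneg (mul_nonneg (h1.1 i) ((μ i).nonneg x))
    (mul_nonneg (h2.1 j) ((ν j).nonneg x))) (ξ.nonneg x)

theorem sum_couplingMass_right (h1 : IsCombo p μ ξ) (h2 : IsCombo q ν ξ) (i : I) (x : X) :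
    ∑ j, couplingMass ξ p μ q ν i j x = p i * (μ i).f x :=
  sum_mul_div_of_sum_eq (h2.2.2 x).symm fun hx => h1.mul_eq_zero_of_eq_zero hx i

theorem sum_couplingMass_left (h1 : IsCombo p μ ξ) (h2 : IsCombo q ν ξ) (j : J) (x : X) :
    ∑ i, couplingMass ξ p μ q ν i j x = q j * (ν j).f x := by
  simp_rw [couplingMass, mul_comm (p _ * _)]
  exact sum_mul_div_of_sum_eq (h1.2.2 x).symm fun hx => h2.mul_eq_zero_of_eq_zero hx j

theorem sum_finsum_couplingMass_right (h1 : IsCombo p μ ξ) (h2 : IsCombo q ν ξ) (i : I) :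
    ∑ j, ∑ᶠ x, couplingMass ξ p μ q ν i j x = p i := by
  rw [← finsum_sum_comm _ _ fun j _ => support_couplingMass_finite i j]
  simp_rw [sum_couplingMass_right h1 h2, ← mul_finsum, (μ i).sum_one, mul_one]

theorem sum_finsum_couplingMass_left (h1 : IsCombo p μ ξ) (h2 : IsCombo q ν ξ) (j : J) :
    ∑ i, ∑ᶠ x, couplingMass ξ p μ q ν i j x = q j := by
  rw [← finsum_sum_comm _ _ fun i _ => support_couplingMass_finite i j]
  simp_rw [sum_couplingMass_left h1 h2, ← mul_finsum, (ν j).sum_one, mul_one]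

end couplingMass

/-- Two convex decompositions of a distribution admit a common refinement. -/
theorem statement0 {X I J : Type} [Fintype I] [Fintype J]
    (ξ : Distr X) (p : I → ℝ) (q : J → ℝ) (μ : I → Distr X) (ν : J → Distr X)
    (h1 : IsCombo p μ ξ) (h2 : IsCombo q ν ξ) :
    ∃ (r : I → J → ℝ) (ϱ : I → J → Distr X),
      (∀ i j, 0 ≤ r i j ∧ r i j ≤ 1) ∧
      (∀ j, ∑ i, r i j = q j) ∧
      (∀ i, ∑ j, r i j = p i) ∧
      (∀ i x, p i * (μ i).f x = ∑ j, r i j * (ϱ i j).f x) ∧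
      (∀ j x, q j * (ν j).f x = ∑ i, r i j * (ϱ i j).f x) := by
  have := ξ.nonempty
  choose ϱ hϱ using fun i j => Distr.exists_eq_finsum_mul (couplingMass_nonneg h1 h2 i j)
    (support_couplingMass_finite i j)
  refine ⟨fun i j => ∑ᶠ x, couplingMass ξ p μ q ν i j x, ϱ, fun i j => ⟨?_, ?_⟩,
    sum_finsum_couplingMass_left h1 h2, sum_finsum_couplingMass_right h1 h2,
    fun i x => ?_, fun j x => ?_⟩
  · exact finsum_nonneg (couplingMass_nonneg h1 h2 i j)
  · calc ∑ᶠ x, couplingMass ξ p μ q ν i j x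
        ≤ ∑ j', ∑ᶠ x, couplingMass ξ p μ q ν i j' x :=
          Finset.single_le_sum (fun j' _ => finsum_nonneg (couplingMass_nonneg h1 h2 i j'))
            (Finset.mem_univ j)
      _ ≤ 1 := sum_finsum_couplingMass_right h1 h2 i ▸ h1.le_one i
  · simp_rw [← hϱ, sum_couplingMass_right h1 h2]
  · simp_rw [← hϱ, sum_couplingMass_left h1 h2]

end PBB
end

section
/- For nondeterministic processes in the minimal process language, rooted branching bisimilarity is a congruence for action prefix and nondeterministic choice: if E₁ ≈_rb F₁ and E₂ ≈_rb F₂ then α.E₁ ≈_rb α.F₁ and E₁ + E₂ ≈_rb F₁ + F₂. -/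
namespace NDB

/-- The minimal process language `E ::= 0 | α.E | E + E`. -/
inductive NE (Act : Type) : Type where
  | zero : NE Act
  | pre : Act → NE Act → NE Act
  | plus : NE Act → NE Act → NE Act

variable {Act : Type}

/-- The SOS transition relation. -/
inductive step : NE Act → Act → NE Act → Prop where
  | pre (α : Act) (E : NE Act) : step (.pre α E) α E
  | left {E₁ E₂ : NE Act} {α : Act} {E' : NE Act} :
      step E₁ α E' → step (.plus E₁ E₂) α E'
  | right {E₁ E₂ : NE Act} {α : Act} {E' : NE Act} :
      step E₂ α E' → step (.plus E₁ E₂) α E'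

variable (τ : Act)

/-- `E →(α) E'` : a transition, or a vacuous step when `α = τ`. -/
def opt (E : NE Act) (α : Act) (E' : NE Act) : Prop :=
  step E α E' ∨ (α = τ ∧ E' = E)

/-- `E ⟹ E'` : the reflexive-transitive closure of `→(τ)`. -/
def wk : NE Act → NE Act → Prop :=
  Relation.ReflTransGen (fun E E' => opt τ E τ E')

/-- Branching bisimulation relations. -/
def IsBB (R : NE Act → NE Act → Prop) : Prop :=
  Symmetric R ∧ ∀ E F α E', R E F → step E α E' →
    ∃ F₁ F₂, wk τ F F₁ ∧ opt τ F₁ α F₂ ∧ R E F₁ ∧ R E' F₂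

/-- Branching bisimilarity `≈_b`. -/
def bb (E F : NE Act) : Prop := ∃ R, IsBB τ R ∧ R E F

/-- Rooted branching bisimilarity `≈_rb`. -/
def rbb (E F : NE Act) : Prop :=
  (∀ α E', step E α E' → ∃ F', step F α F' ∧ bb τ E' F') ∧
  (∀ α F', step F α F' → ∃ E', step E α E' ∧ bb τ E' F')

/-- Strong bisimulation relations. -/
def IsSB (R : NE Act → NE Act → Prop) : Prop :=
  Symmetric R ∧ ∀ E F α E', R E F → step E α E' →
    ∃ F', step F α F' ∧ R E' F'

/-- Strong bisimilarity `∼`. -/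
def sb (E F : NE Act) : Prop := ∃ R, IsSB R ∧ R E F

/-- `reach E E'` : `E'` is a derivative of `E`. -/
def reach : NE Act → NE Act → Prop :=
  Relation.ReflTransGen (fun E E' => ∃ α, step E α E')

/-- A process is concrete iff no derivative has an inert `τ`-transition. -/
def Concrete (E : NE Act) : Prop :=
  ∀ E', reach E E' → ∀ E'', step E' τ E'' → ¬ bb τ E' E''

/-- Provable equality in the theory `AX^b` (axioms A1–A4 and B). -/
inductive AXb (τ : Act) : NE Act → NE Act → Prop where
  | refl (E) : AXb τ E E
  | symm {E F} : AXb τ E F → AXb τ F E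
  | trans {E F G} : AXb τ E F → AXb τ F G → AXb τ E G
  | congPre (α : Act) {E F} : AXb τ E F → AXb τ (.pre α E) (.pre α F)
  | congPlusL {E E' F} : AXb τ E E' → AXb τ (.plus E F) (.plus E' F)
  | congPlusR {E F F'} : AXb τ F F' → AXb τ (.plus E F) (.plus E F')
  | A1 (E F) : AXb τ (.plus E F) (.plus F E)
  | A2 (E F G) : AXb τ (.plus (.plus E F) G) (.plus E (.plus F G))
  | A3 (E) : AXb τ (.plus E E) E
  | A4 (E) : AXb τ (.plus E .zero) E
  | B (α : Act) (E F) :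
      AXb τ (.pre α (.plus F (.pre τ (.plus E F)))) (.pre α (.plus E F))



variable {τ}

theorem isBB_bb : IsBB τ (bb τ) := by
  refine ⟨fun E F ⟨R, hR, h⟩ => ⟨R, hR, hR.1 h⟩, ?_⟩
  rintro E F α E' ⟨R, hR, h⟩ hs
  obtain ⟨F₁, F₂, hw, ho, h₁, h₂⟩ := hR.2 E F α E' h hs
  exact ⟨F₁, F₂, hw, ho, ⟨R, hR, h₁⟩, ⟨R, hR, h₂⟩⟩

theorem bb_symm {E F : NE Act} (h : bb τ E F) : bb τ F E :=
  isBB_bb.1 h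

theorem rbb_symm {E F : NE Act} (h : rbb τ E F) : rbb τ F E :=
  ⟨fun α F' hs => (h.2 α F' hs).imp fun _ ⟨hs', hb⟩ => ⟨hs', bb_symm hb⟩,
   fun α E' hs => (h.1 α E' hs).imp fun _ ⟨hs', hb⟩ => ⟨hs', bb_symm hb⟩⟩

theorem isBB_bb_or_rbb : IsBB τ (fun E F => bb τ E F ∨ rbb τ E F) := by
  refine ⟨fun E F h => h.imp bb_symm rbb_symm, ?_⟩
  rintro E F α E' (hb | hr) hs
  · obtain ⟨F₁, F₂, hw, ho, h₁, h₂⟩ := isBB_bb.2 E F α E' hb hs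
    exact ⟨F₁, F₂, hw, ho, .inl h₁, .inl h₂⟩
  · obtain ⟨F', hs', hb⟩ := hr.1 α E' hs
    exact ⟨F, F', .refl, .inl hs', .inr hr, .inl hb⟩

theorem bb_of_rbb {E F : NE Act} (h : rbb τ E F) : bb τ E F :=
  ⟨_, isBB_bb_or_rbb, .inr h⟩

theorem rbb_pre_of_bb {E F : NE Act} (h : bb τ E F) (α : Act) :
    rbb τ (.pre α E) (.pre α F) := by
  constructor
  · rintro _ _ ⟨⟩
    exact ⟨F, .pre α F, h⟩
  · rintro _ _ ⟨⟩
    exact ⟨E, .pre α E, h⟩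

theorem rbb_plus {E₁ E₂ F₁ F₂ : NE Act} (h₁ : rbb τ E₁ F₁) (h₂ : rbb τ E₂ F₂) :
    rbb τ (.plus E₁ E₂) (.plus F₁ F₂) := by
  constructor
  · rintro α E' (_ | hs | hs)
    · obtain ⟨F', hs', hb⟩ := h₁.1 α E' hs
      exact ⟨F', .left hs', hb⟩
    · obtain ⟨F', hs', hb⟩ := h₂.1 α E' hs
      exact ⟨F', .right hs', hb⟩
  · rintro α F' (_ | hs | hs)
    · obtain ⟨E', hs', hb⟩ := h₁.2 α F' hs
      exact ⟨E', .left hs', hb⟩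
    · obtain ⟨E', hs', hb⟩ := h₂.2 α F' hs
      exact ⟨E', .right hs', hb⟩

/-- Rooted branching bisimilarity is a congruence for prefix and choice. -/
theorem statement8 {Act : Type} (τ : Act) {E₁ E₂ F₁ F₂ : NE Act}
    (h1 : rbb τ E₁ F₁) (h2 : rbb τ E₂ F₂) :
    (∀ α : Act, rbb τ (.pre α E₁) (.pre α F₁)) ∧
    rbb τ (.plus E₁ E₂) (.plus F₁ F₂) :=
  ⟨rbb_pre_of_bb (bb_of_rbb h1), rbb_plus h1 h2⟩

end NDB
end
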